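/- Let G = (S, M_e, M_s, ρ) be a game structure and Safe ⊆ S. Then for every state s ∈ S: there exists a Sys strategy σ_s such that every play from s consistent with σ_s remains in Safe at every position (i.e., s is winning for Sys for the safety objective Safety(Safe)) if and only if s ∉ Attr_Env(S ∖ Safe). -/

import Mathlib

/-- A two-player game structure: states `S`, environment moves `Me`, system moves `Ms`,
and a transition relation such that every state has a successor and the two players'
moves uniquely determine the successor. -/
structure GameStructure (S : Type*) (Me : Type*) (Ms : Type*) where
  rel : S → Me → Ms → S → Prop
  exists_succ : ∀ s : S, ∃ (me : Me) (ms : Ms) (s' : S), rel s me ms s'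
  deterministic : ∀ (s : S) (me : Me) (ms : Ms) (s₁ s₂ : S),
    rel s me ms s₁ → rel s me ms s₂ → s₁ = s₂

variable {S Me Ms : Type*}

/-- The environment moves enabled in a state. -/
def enabledE (G : GameStructure S Me Ms) (s : S) : Set Me :=
  {me | ∃ (ms : Ms) (s' : S), G.rel s me ms s'}

/-- The system moves enabled in a state after a given environment move. -/
def enabledS (G : GameStructure S Me Ms) (s : S) (me : Me) : Set Ms :=
  {ms | ∃ s' : S, G.rel s me ms s'}

/-- A strategy for the system player: it maps a nonempty finite sequence of states,
given as the pair of its strict prefix `h = (s₀, …, s_{n-1})` and its last state `s = sₙ`,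
together with an environment move, to a system move; on enabled environment moves it
must choose an enabled system move. -/
structure SysStrategy (G : GameStructure S Me Ms) where
  act : List S → S → Me → Ms
  act_enabled : ∀ (h : List S) (s : S) (me : Me),
    me ∈ enabledE G s → act h s me ∈ enabledS G s me

/-- A strategy for the environment player: it maps a nonempty finite sequence of states,
given as the pair of its strict prefix `h = (s₀, …, s_{n-1})` and its last state `s = sₙ`,
to an enabled environment move. -/
structure EnvStrategy (G : GameStructure S Me Ms) where
  act : List S → S → Me
  act_enabled : ∀ (h : List S) (s : S), act h s ∈ enabledE G s

/-- `π` is a play consistent with the system strategy `σ`: at every step `n` there is an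
enabled environment move `me` such that the transition from `π n` under `me` and the
move chosen by `σ` on the history `(π 0, …, π n)` leads to `π (n+1)`. -/
def SysPlay (G : GameStructure S Me Ms) (σ : SysStrategy G) (π : ℕ → S) : Prop :=
  ∀ n : ℕ, ∃ me ∈ enabledE G (π n),
    G.rel (π n) me (σ.act ((List.range n).map π) (π n) me) (π (n + 1))

/-- `π` is a play consistent with the environment strategy `σ`: at every step `n` there
is a system move `ms` enabled after the environment move chosen by `σ` on the history
`(π 0, …, π n)` such that the corresponding transition leads to `π (n+1)`. -/
def EnvPlay (G : GameStructure S Me Ms) (σ : EnvStrategy G) (π : ℕ → S) : Prop :=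
  ∀ n : ℕ, ∃ ms ∈ enabledS G (π n) (σ.act ((List.range n).map π) (π n)),
    G.rel (π n) (σ.act ((List.range n).map π) (π n)) ms (π (n + 1))

/-- The system attractor of `T`: states from which the system has a strategy forcing
every consistent play to visit `T`. -/
def attrSys (G : GameStructure S Me Ms) (T : Set S) : Set S :=
  {s | ∃ σ : SysStrategy G, ∀ π : ℕ → S, π 0 = s → SysPlay G σ π → ∃ n : ℕ, π n ∈ T}

/-- The environment attractor of `T`: states from which the environment has a strategy
forcing every consistent play to visit `T`. -/
def attrEnv (G : GameStructure S Me Ms) (T : Set S) : Set S :=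
  {s | ∃ σ : EnvStrategy G, ∀ π : ℕ → S, π 0 = s → EnvPlay G σ π → ∃ n : ℕ, π n ∈ T}

/-- The controllable predecessor operator for the system player. -/
def cpreSys (G : GameStructure S Me Ms) (X : Set S) : Set S :=
  {s | ∀ me ∈ enabledE G s, ∃ ms ∈ enabledS G s me, ∀ s' : S, G.rel s me ms s' → s' ∈ X}

/-- The controllable predecessor operator for the environment player. -/
def cpreEnv (G : GameStructure S Me Ms) (X : Set S) : Set S :=
  {s | ∃ me ∈ enabledE G s, ∀ ms ∈ enabledS G s me, ∀ s' : S, G.rel s me ms s' → s' ∈ X}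

/-- A semantic acceleration lemma over a type `A`: a triple `(base, step, conc)` of
subsets such that (i) every infinite `step`-sequence starting in `conc` eventually
reaches `base`, and (ii) `conc \ base` is closed under `step`-successors. -/
def IsAccelLemma {A : Type*} (base : Set A) (step : Set (A × A)) (conc : Set A) : Prop :=
  (∀ α : ℕ → A, α 0 ∈ conc → (∀ i : ℕ, (α i, α (i + 1)) ∈ step) → ∃ k : ℕ, α k ∈ base) ∧
  (∀ a ∈ conc, a ∉ base → ∀ a' : A, (a, a') ∈ step → a' ∈ conc)

section AuxSafetyDuality

/-- A default enabled environment move in each state. -/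
noncomputable def defaultMe (G : GameStructure S Me Ms) (s : S) : Me :=
  (G.exists_succ s).choose

lemma defaultMe_enabled (G : GameStructure S Me Ms) (s : S) :
    defaultMe G s ∈ enabledE G s := by
  obtain ⟨ms, s', h⟩ := (G.exists_succ s).choose_spec
  exact ⟨ms, s', h⟩

/-- A default environment strategy. -/
noncomputable def defaultEnv (G : GameStructure S Me Ms) : EnvStrategy G :=
  ⟨fun _ t => defaultMe G t, fun _ t => defaultMe_enabled G t⟩

lemma subset_attrEnv (G : GameStructure S Me Ms) (T : Set S) : T ⊆ attrEnv G T :=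
  fun t ht => ⟨defaultEnv G, fun π hπ0 _ => ⟨0, hπ0 ▸ ht⟩⟩

/-- For each state, a (purported) winning environment strategy towards `T`. -/
noncomputable def winStrat (G : GameStructure S Me Ms) (T : Set S) (a : S) :
    EnvStrategy G := by
  classical exact if h : a ∈ attrEnv G T then h.choose else defaultEnv G

lemma winStrat_spec (G : GameStructure S Me Ms) (T : Set S) (a : S)
    (ha : a ∈ attrEnv G T) :
    ∀ π : ℕ → S, π 0 = a → EnvPlay G (winStrat G T a) π → ∃ n, π n ∈ T := by
  classical
  simp only [winStrat, dif_pos ha]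
  exact ha.choose_spec

lemma range_map_zero (π : ℕ → S) : (List.range 0).map π = [] := by simp

lemma range_map_succ (π : ℕ → S) (n : ℕ) :
    (List.range (n + 1)).map π = (List.range n).map π ++ [π n] := by
  rw [List.range_succ, List.map_append]; rfl

lemma range_map_shift (π : ℕ → S) (n : ℕ) :
    (List.range (n + 1)).map π = π 0 :: (List.range n).map (fun i => π (i + 1)) := by
  rw [List.range_succ_eq_map, List.map_cons, List.map_map]; rfl

lemma headD_range_map (π : ℕ → S) (n : ℕ) :
    (((List.range n).map π).headD (π n)) = π 0 := by
  cases n with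
  | zero => simp
  | succ m => rw [List.range_succ_eq_map]; simp

/-- Composition lemma: if from `s` the environment has an enabled move all of whose
successors are in the attractor of `T`, then `s` is in the attractor of `T`. -/
lemma mem_attrEnv_of_cpre (G : GameStructure S Me Ms) (T : Set S) (s : S) (me : Me)
    (hme : me ∈ enabledE G s)
    (hsucc : ∀ ms ∈ enabledS G s me, ∀ s', G.rel s me ms s' → s' ∈ attrEnv G T) :
    s ∈ attrEnv G T := by
  classical
  refine ⟨⟨fun h t =>
    match h with
    | [] => if t = s then me else defaultMe G t
    | _ :: h' => (winStrat G T (h'.headD t)).act h' t, ?_⟩, ?_⟩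
  · intro h t
    match h with
    | [] =>
      dsimp only
      split
      · next heq => exact heq ▸ hme
      · exact defaultMe_enabled G t
    | _ :: h' => exact (winStrat G T (h'.headD t)).act_enabled h' t
  · intro π hπ0 hplay
    -- the first step goes to a state in the attractor
    have h0 := hplay 0
    simp only [range_map_zero] at h0
    have hact0 : (if π 0 = s then me else defaultMe G (π 0)) = me := if_pos hπ0
    rw [hact0] at h0
    obtain ⟨ms, hms, hrel⟩ := h0
    rw [hπ0] at hms hrel
    have h1 : π 1 ∈ attrEnv G T := hsucc ms hms (π 1) hrel
    set π' : ℕ → S := fun n => π (n + 1) with hπ'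
    have hshift : EnvPlay G (winStrat G T (π 1)) π' := by
      intro n
      have h := hplay (n + 1)
      rw [range_map_shift] at h
      have hh : ((List.range n).map π').headD (π' n) = π 1 := headD_range_map π' n
      rw [← hh]
      exact h
    obtain ⟨k, hk⟩ := winStrat_spec G T (π 1) h1 π' rfl hshift
    exact ⟨k + 1, hk⟩

/-- The deterministic successor chosen when the environment strategy `τ` and
system strategy `σ` face each other. -/
noncomputable def jointStep (G : GameStructure S Me Ms) (σ : SysStrategy G)
    (τ : EnvStrategy G) (h : List S) (t : S) : S :=
  (σ.act_enabled h t (τ.act h t) (τ.act_enabled h t)).choose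

lemma jointStep_rel (G : GameStructure S Me Ms) (σ : SysStrategy G)
    (τ : EnvStrategy G) (h : List S) (t : S) :
    G.rel t (τ.act h t) (σ.act h t (τ.act h t)) (jointStep G σ τ h t) :=
  (σ.act_enabled h t (τ.act h t) (τ.act_enabled h t)).choose_spec

/-- The joint play of `σ` against `τ` from `s`, as (history, current state) pairs. -/
noncomputable def jointHist (G : GameStructure S Me Ms) (σ : SysStrategy G)
    (τ : EnvStrategy G) (s : S) : ℕ → List S × S
  | 0 => ([], s)
  | n + 1 =>
    ((jointHist G σ τ s n).1 ++ [(jointHist G σ τ s n).2],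
      jointStep G σ τ (jointHist G σ τ s n).1 (jointHist G σ τ s n).2)

lemma jointHist_fst (G : GameStructure S Me Ms) (σ : SysStrategy G)
    (τ : EnvStrategy G) (s : S) (n : ℕ) :
    (jointHist G σ τ s n).1 = (List.range n).map (fun i => (jointHist G σ τ s i).2) := by
  induction n with
  | zero => simp [jointHist]
  | succ m ih => rw [range_map_succ, jointHist, ← ih]

end AuxSafetyDuality

/-- Duality between safety and reachability: a state is winning for the system player
for the safety objective `Safety(Safe)` if and only if it is not in the environment
attractor of the unsafe states. -/
theorem safety_winning_iff_not_mem_attrEnv (G : GameStructure S Me Ms) (Safe : Set S)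
    (s : S) :
    (∃ σ : SysStrategy G, ∀ π : ℕ → S, π 0 = s → SysPlay G σ π → ∀ n : ℕ, π n ∈ Safe) ↔
      s ∉ attrEnv G Safeᶜ := by
  classical
  constructor
  · rintro ⟨σ, hσ⟩ ⟨τ, hτ⟩
    set π : ℕ → S := fun n => (jointHist G σ τ s n).2 with hπdef
    have hπ0 : π 0 = s := rfl
    have hrel : ∀ n, G.rel (π n) (τ.act ((List.range n).map π) (π n))
        (σ.act ((List.range n).map π) (π n) (τ.act ((List.range n).map π) (π n)))
        (π (n + 1)) := by
      intro n
      rw [show (List.range n).map π = (jointHist G σ τ s n).1 from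
        (jointHist_fst G σ τ s n).symm]
      exact jointStep_rel G σ τ _ _
    have hEnv : EnvPlay G τ π := fun n =>
      ⟨σ.act ((List.range n).map π) (π n) (τ.act ((List.range n).map π) (π n)),
        ⟨π (n + 1), hrel n⟩, hrel n⟩
    have hSys : SysPlay G σ π := fun n =>
      ⟨τ.act ((List.range n).map π) (π n), τ.act_enabled _ _, hrel n⟩
    obtain ⟨n, hn⟩ := hτ π hπ0 hEnv
    exact hn (hσ π hπ0 hSys n)
  · intro hs
    set A : Set S := attrEnv G Safeᶜ with hA
    -- key step: from outside A, the system can stay outside A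
    have step : ∀ t ∉ A, ∀ me ∈ enabledE G t,
        ∃ ms ∈ enabledS G t me, ∀ s', G.rel t me ms s' → s' ∉ A := by
      intro t htA me hme
      by_contra hc
      push_neg at hc
      refine htA (mem_attrEnv_of_cpre G Safeᶜ t me hme ?_)
      intro ms hms s' hrel
      obtain ⟨s'', hrel'', hs''⟩ := hc ms hms
      rwa [G.deterministic t me ms s' s'' hrel hrel'']
    have hx : ∀ (t : S) (me : Me), ∃ ms : Ms, me ∈ enabledE G t →
        ms ∈ enabledS G t me ∧ (t ∉ A → ∀ s', G.rel t me ms s' → s' ∉ A) := by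
      intro t me
      by_cases hme : me ∈ enabledE G t
      · by_cases htA : t ∈ A
        · obtain ⟨ms, s', hr⟩ := hme
          exact ⟨ms, fun _ => ⟨⟨s', hr⟩, fun h => absurd htA h⟩⟩
        · obtain ⟨ms, hms, hsucc⟩ := step t htA me hme
          exact ⟨ms, fun _ => ⟨hms, fun _ => hsucc⟩⟩
      · obtain ⟨me', ms', s', _⟩ := G.exists_succ t
        exact ⟨ms', fun h => absurd h hme⟩
    choose pick hpick using hx
    refine ⟨⟨fun _ t me => pick t me, fun h t me hme => (hpick t me hme).1⟩, ?_⟩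
    intro π hπ0 hplay n
    have hnA : ∀ m, π m ∉ A := by
      intro m
      induction m with
      | zero => rwa [hπ0]
      | succ k ih =>
        obtain ⟨me, hme, hrel⟩ := hplay k
        exact (hpick (π k) me hme).2 ih (π (k + 1)) hrel
    by_contra h
    exact hnA n (subset_attrEnv G Safeᶜ h)
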